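/- Let λ ∈ 𝒫_C(n) have distinct parts a₁ > a₂ > ⋯ > a_m (m ≥ 2) with multiplicities k₁, k₂, …, k_m, where k₁ and k_m are odd and k₂, …, k_{m−1} are even. Then a_m is even, the only even part of the transpose λ* is K := k₁ + ⋯ + k_m = #λ, and the multiplicity of K in λ* equals a_m; in particular every part of λ* other than K is odd. -/

import Mathlib

/-!
The parts of `λ*` are the heights `h(x) = #{parts ≥ x}` for `1 ≤ x ≤ |λ|`. For `x ≤ a_m` every
part counts, so `h(x) = K`, and this happens for exactly `a_m` values of `x`. For `x > a_m` the
parts `a_m` drop out, so a positive `h(x)` is `k₁` plus a sum of even multiplicities, hence odd.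
Finally `K = k₁ + k_m + (even)` is even, and `a_m` is even because its multiplicity `k_m` is odd
while odd parts of a partition in `𝒫_C` have even multiplicity.
-/

namespace NilDual

/-- A "partition" is encoded as a multiset of natural numbers (its parts). -/
abbrev Ptn := Multiset ℕ

/-- All parts are positive. -/
def IsPartition (l : Ptn) : Prop := ∀ a ∈ l, 0 < a

/-- `height l a` is the number of parts of `l` that are ≥ `a`. -/
def height (l : Ptn) (a : ℕ) : ℕ := Multiset.card (l.filter (fun p => a ≤ p))

/-- `psum l j` is the sum of the `j` largest parts of `l`. -/
def psum (l : Ptn) (j : ℕ) : ℕ := ∑ a ∈ Finset.Icc 1 l.sum, min j (height l a)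

/-- `Dom l m` means `l ≤ m` in the dominance order. -/
def Dom (l m : Ptn) : Prop := ∀ j : ℕ, psum l j ≤ psum m j

/-- The transpose (conjugate) partition. -/
def transpose (l : Ptn) : Ptn :=
  Multiset.filter (fun x => 0 < x)
    (Multiset.map (fun a => height l a) (Finset.Icc 1 l.sum).val)

/-- The largest part (0 for the empty partition). -/
def maxPart (l : Ptn) : ℕ := l.sup

/-- The smallest part (0 for the empty partition). -/
noncomputable def minPart (l : Ptn) : ℕ := sInf {a : ℕ | a ∈ l}

/-- `λ⁺`: add 1 to the largest part. -/
def up (l : Ptn) : Ptn := (maxPart l + 1) ::ₘ l.erase (maxPart l)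

/-- `λ⁻`: subtract 1 from the smallest part, deleting it if it becomes 0. -/
noncomputable def down (l : Ptn) : Ptn :=
  if minPart l ≤ 1 then l.erase (minPart l)
  else (minPart l - 1) ::ₘ l.erase (minPart l)

/-- The join `λ ∨ μ = (λ* ∪ μ*)*`. -/
def pjoin (l m : Ptn) : Ptn := transpose (transpose l + transpose m)

/-- `λ₋ = (λ*⁻)*`. -/
noncomputable def lowerStar (l : Ptn) : Ptn := transpose (down (transpose l))

inductive PType | B | C | D
deriving DecidableEq

/-- Parts of this parity must occur with even multiplicity in a partition of type `X`. -/
def badPart : PType → ℕ → Prop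
  | PType.B, a => Even a
  | PType.C, a => Odd a
  | PType.D, a => Even a

/-- Membership in `𝒫_X` (sum unconstrained). -/
def InP (X : PType) (l : Ptn) : Prop :=
  IsPartition l ∧ ∀ a : ℕ, badPart X a → Even (l.count a)

/-- The parity of `n` required for `𝒫_X(n)` to be defined. -/
def sumParity : PType → ℕ → Prop
  | PType.B, n => Odd n
  | PType.C, n => Even n
  | PType.D, n => Even n

/-- `m` is the X-collapse of `l`: `m ∈ 𝒫_X(|l|)`, `m ≤ l` in dominance order, and `m`
dominates every member of `𝒫_X(|l|)` that is dominated by `l`. -/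
def IsCollapse (X : PType) (l m : Ptn) : Prop :=
  InP X m ∧ m.sum = l.sum ∧ Dom m l ∧
    ∀ ν : Ptn, InP X ν → ν.sum = l.sum → Dom ν l → Dom ν m

def CollapseDefined (X : PType) (l : Ptn) : Prop := ∃ m, IsCollapse X l m

open Classical in
/-- The X-collapse `λ_X` (junk value `0` if it does not exist). -/
noncomputable def collapse (X : PType) (l : Ptn) : Ptn :=
  if h : CollapseDefined X l then h.choose else 0

/-- `l` is superior to `m`: smallest part of `l` ≥ largest part of `m`. -/
def Superior (l m : Ptn) : Prop := maxPart m ≤ minPart l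

def EvenlySuperior (l m : Ptn) : Prop := ∃ k : ℕ, Even k ∧ maxPart m ≤ k ∧ k ≤ minPart l

def OddlySuperior (l m : Ptn) : Prop := ∃ k : ℕ, Odd k ∧ maxPart m ≤ k ∧ k ≤ minPart l

/-- The parity required of marked parts in type `X`. -/
def markParity : PType → ℕ → Prop
  | PType.C, a => Even a
  | _, a => Odd a

/-- `(ν, η)` is a marked partition of type `X`, with underlying partition `λ = ν + η`. -/
def IsMarked (X : PType) (nu eta : Ptn) : Prop :=
  InP X (nu + eta) ∧ sumParity X (nu + eta).sum ∧
  (∀ a ∈ nu, nu.count a = 1 ∧ markParity X a) ∧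
  ((X = PType.B ∨ X = PType.D) → Even (Multiset.card nu))

/-- The Sommers duality map `d_S` on marked partitions `(ν, η)`. -/
noncomputable def dS (X : PType) (nu eta : Ptn) : Ptn :=
  match X with
  | PType.B => collapse PType.C (transpose (nu + collapse PType.C (down eta)))
  | PType.C => collapse PType.B (transpose (nu + collapse PType.B (up eta)))
  | PType.D =>
      collapse PType.D (transpose (nu + transpose (collapse PType.D (transpose eta))))

/-- `a` is a markable part of `l` in type `X`. -/
def Markable (X : PType) (l : Ptn) (a : ℕ) : Prop :=
  a ∈ l ∧ markParity X a ∧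
    (match X with
     | PType.B => Odd (height l a)
     | PType.C => Even (height l a)
     | PType.D => Even (height l a))

/-- The marked partition `⟨l, ν⟩` is reduced. -/
def Reduced (X : PType) (l nu : Ptn) : Prop := ∀ a ∈ nu, Markable X l a

/-- The parts entering the definition of a special marked partition:
even of odd height (B), odd of even height (C), even of even height (D). -/
def AntiPart (X : PType) (l : Ptn) (a : ℕ) : Prop :=
  match X with
  | PType.B => Even a ∧ Odd (height l a)
  | PType.C => Odd a ∧ Even (height l a)
  | PType.D => Even a ∧ Even (height l a)

/-- The reduced marked partition `⟨l, ν⟩` is special. -/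
def SpecialMP (X : PType) (l nu : Ptn) : Prop :=
  ∀ a ∈ l, AntiPart X l a → Even (height nu a)

/-- `a` is the largest part of `l` whose height satisfies `P`. -/
def LargestWith (l : Ptn) (P : ℕ → Prop) (a : ℕ) : Prop :=
  a ∈ l ∧ P (height l a) ∧ ∀ b ∈ l, P (height l b) → b ≤ a

/-- Height parity for the top marked part in a basic block. -/
def heightParity : PType → ℕ → Prop
  | PType.B => fun n => Odd n
  | _ => fun n => Even n

/-- A basic block of type `X`. -/
def BasicBlock (X : PType) (nu eta : Ptn) : Prop :=
  IsMarked X nu eta ∧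
  ((∃ n1 n2 : ℕ, n1 < n2 ∧ nu = {n2, n1} ∧ n1 = minPart (nu + eta) ∧
      LargestWith (nu + eta) (heightParity X) n2) ∨
   (X = PType.C ∧ ∃ n2 : ℕ, nu = {n2} ∧ LargestWith (nu + eta) (heightParity X) n2))

/-- An ultrabasic block: a basic block with `n₁ ≤ 1`. -/
def Ultrabasic (X : PType) (nu eta : Ptn) : Prop :=
  BasicBlock X nu eta ∧ (Multiset.card nu = 2 → minPart nu ≤ 1)


open Multiset

lemma InP.even_of_odd_count {l : Ptn} (hl : InP PType.C l) {a : ℕ} (ha : Odd (l.count a)) :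
    Even a := by
  by_contra h
  exact Nat.not_even_iff_odd.2 ha (hl.2 a (Nat.not_even_iff_odd.1 h))

lemma height_eq_countP (l : Ptn) (x : ℕ) : height l x = l.countP (x ≤ ·) :=
  (countP_eq_card_filter _ _).symm

lemma height_eq_card {l : Ptn} {x : ℕ} (h : ∀ p ∈ l, x ≤ p) : height l x = card l := by
  rw [height_eq_countP, countP_eq_card.2 h]

lemma height_lt_card {l : Ptn} {x p : ℕ} (hp : p ∈ l) (hpx : p < x) :
    height l x < card l := by
  rw [height_eq_countP, card_eq_countP_add_countP (x ≤ ·) l]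
  exact Nat.lt_add_of_pos_right (countP_pos_of_mem hp (not_le.2 hpx))

lemma mem_transpose {l : Ptn} {b : ℕ} :
    b ∈ transpose l ↔ 0 < b ∧ ∃ x ∈ Finset.Icc 1 l.sum, height l x = b := by
  simp only [transpose, mem_filter, mem_map, Finset.mem_val]
  exact and_comm

lemma count_card_transpose {l : Ptn} {c : ℕ} (hc : c ∈ l) (hmin : ∀ p ∈ l, c ≤ p) :
    (transpose l).count (card l) = c := by
  have hfilter : (Finset.Icc 1 l.sum).filter (fun x => card l = height l x) = Finset.Icc 1 c := by
    ext x
    simp only [Finset.mem_filter, Finset.mem_Icc]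
    constructor
    · rintro ⟨⟨hx1, -⟩, hx⟩
      exact ⟨hx1, not_lt.1 fun hcx => (height_lt_card hc hcx).ne' hx⟩
    · rintro ⟨hx1, hxc⟩
      exact ⟨⟨hx1, hxc.trans (le_sum_of_mem hc)⟩,
        (height_eq_card fun p hp => hxc.trans (hmin p hp)).symm⟩
  rw [transpose, count_filter_of_pos (card_pos_iff_exists_mem.2 ⟨c, hc⟩), count_map,
    ← Finset.filter_val, hfilter, Finset.card_val, Nat.card_Icc, Nat.add_sub_cancel]

section SumReplicate

variable {ι : Type*}

lemma height_sum_replicate (k a : ι → ℕ) (s : Finset ι) (x : ℕ) :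
    height (∑ i ∈ s, replicate (k i) (a i)) x = ∑ i ∈ s with x ≤ a i, k i := by
  rw [height_eq_countP, ← coe_countPAddMonoidHom, map_sum, Finset.sum_filter]
  refine Finset.sum_congr rfl fun i _ => ?_
  rw [coe_countPAddMonoidHom]
  split_ifs with h
  · exact (countP_eq_card.2 fun p hp => eq_of_mem_replicate hp ▸ h).trans (card_replicate _ _)
  · exact countP_eq_zero.2 fun p hp => eq_of_mem_replicate hp ▸ h

lemma count_sum_replicate [Fintype ι] (k : ι → ℕ) {a : ι → ℕ} (ha : Function.Injective a) (i : ι) :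
    count (a i) (∑ j, replicate (k j) (a j)) = k i := by
  rw [count_sum', Finset.sum_eq_single i (fun j _ hj => by simp [count_replicate, ha.eq_iff, hj])
    (by simp)]
  simp

end SumReplicate

section Parity

variable {ι : Type*} [DecidableEq ι] {k : ι → ℕ} {i₀ i₁ : ι}

lemma odd_sum_of_mem_of_notMem (h₀ : Odd (k i₀)) (hmid : ∀ i, i ≠ i₀ → i ≠ i₁ → Even (k i))
    {s : Finset ι} (hs₀ : i₀ ∈ s) (hs₁ : i₁ ∉ s) : Odd (∑ i ∈ s, k i) := by
  rw [← Finset.add_sum_erase s k hs₀]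
  refine h₀.add_even (Finset.even_sum _ fun i hi => hmid i (Finset.ne_of_mem_erase hi) ?_)
  rintro rfl
  exact hs₁ (Finset.mem_of_mem_erase hi)

lemma even_sum_of_odd_of_odd [Fintype ι] (h₀ : Odd (k i₀)) (h₁ : Odd (k i₁))
    (hmid : ∀ i, i ≠ i₀ → i ≠ i₁ → Even (k i)) (hne : i₀ ≠ i₁) : Even (∑ i, k i) := by
  rw [← Finset.add_sum_erase _ k (Finset.mem_univ i₁)]
  exact h₁.add_odd (odd_sum_of_mem_of_notMem h₀ hmid
    (Finset.mem_erase.2 ⟨hne, Finset.mem_univ _⟩) (Finset.notMem_erase _ _))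

lemma odd_height_sum_replicate [Fintype ι] {a : ι → ℕ} (h₀ : Odd (k i₀))
    (hmid : ∀ i, i ≠ i₀ → i ≠ i₁ → Even (k i)) (hmax : ∀ i, a i ≤ a i₀) {x : ℕ}
    (hx : a i₁ < x) (hpos : 0 < height (∑ i, replicate (k i) (a i)) x) :
    Odd (height (∑ i, replicate (k i) (a i)) x) := by
  rw [height_sum_replicate] at hpos ⊢
  obtain ⟨i, hi, -⟩ := Finset.exists_ne_zero_of_sum_ne_zero hpos.ne'
  have hxi : x ≤ a i := (Finset.mem_filter.1 hi).2
  exact odd_sum_of_mem_of_notMem h₀ hmid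
    (Finset.mem_filter.2 ⟨Finset.mem_univ _, hxi.trans (hmax i)⟩)
    (fun h => (Finset.mem_filter.1 h).2.not_gt hx)

end Parity

/-- Properties of staircases from the proof of Lemma 5.5 of the paper: if
`λ ∈ 𝒫_C(n)` is a staircase with distinct parts `a₁ > ⋯ > a_m` (`m ≥ 2`) of
multiplicities `k₁, …, k_m` with `k₁, k_m` odd and the rest even, then `a_m` is even,
the only even part of `λ*` is `K = #λ`, it occurs with multiplicity `a_m`, and all other
parts of `λ*` are odd. -/
theorem staircase_transpose (m : ℕ) (hm : 2 ≤ m) (a k : Fin m → ℕ) (lam : Ptn)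
    (hlam : lam = ∑ i : Fin m, Multiset.replicate (k i) (a i))
    (hanti : ∀ i j : Fin m, i < j → a j < a i)
    (hpos : ∀ i, 0 < a i)
    (hC : InP PType.C lam)
    (hk0 : Odd (k ⟨0, by omega⟩)) (hklast : Odd (k ⟨m - 1, by omega⟩))
    (hkmid : ∀ i : Fin m, i.val ≠ 0 → i.val ≠ m - 1 → Even (k i)) :
    Even (a ⟨m - 1, by omega⟩) ∧
    Multiset.card lam ∈ transpose lam ∧
    Even (Multiset.card lam) ∧
    (∀ b ∈ transpose lam, Even b → b = Multiset.card lam) ∧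
    (transpose lam).count (Multiset.card lam) = a ⟨m - 1, by omega⟩ ∧
    (∀ b ∈ transpose lam, b ≠ Multiset.card lam → Odd b) := by
  set i₀ : Fin m := ⟨0, by omega⟩
  set i₁ : Fin m := ⟨m - 1, by omega⟩
  have hne : i₀ ≠ i₁ := by simp [i₀, i₁, Fin.ext_iff]; omega
  have hmid : ∀ i, i ≠ i₀ → i ≠ i₁ → Even (k i) := fun i h₀ h₁ =>
    hkmid i (fun h => h₀ (Fin.ext h)) (fun h => h₁ (Fin.ext h))
  have hanti : StrictAnti a := fun i j h => hanti i j h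
  have hmax : ∀ i, a i ≤ a i₀ := fun i => hanti.antitone (Fin.le_def.2 (Nat.zero_le _))
  have hmin : ∀ i, a i₁ ≤ a i := fun i =>
    hanti.antitone (Fin.le_def.2 (Nat.le_sub_one_of_lt i.isLt))
  have hcount : ∀ i, lam.count (a i) = k i := hlam ▸ count_sum_replicate k hanti.injective
  have hle_parts : ∀ p ∈ lam, a i₁ ≤ p := by
    simp only [hlam, mem_sum, mem_replicate]
    rintro p ⟨i, -, -, rfl⟩
    exact hmin i
  have hcountK : (transpose lam).count (card lam) = a i₁ :=
    count_card_transpose (count_pos.1 ((hcount i₁).symm ▸ hklast.pos)) hle_parts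
  have hparts : ∀ b ∈ transpose lam, b = card lam ∨ Odd b := by
    intro b hb
    obtain ⟨hb0, x, -, rfl⟩ := mem_transpose.1 hb
    rcases le_or_gt x (a i₁) with hx | hx
    · exact .inl (height_eq_card fun p hp => hx.trans (hle_parts p hp))
    · subst hlam
      exact .inr (odd_height_sum_replicate hk0 hmid hmax hx hb0)
  have hcard_even : Even (card lam) := by
    simpa [hlam] using even_sum_of_odd_of_odd hk0 hklast hmid hne
  refine ⟨hC.even_of_odd_count ((hcount i₁).symm ▸ hklast), count_pos.1 (hcountK ▸ hpos i₁), hcard_even,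
    fun b hb hbe => (hparts b hb).resolve_right (Nat.not_odd_iff_even.2 hbe), hcountK,
    fun b hb hbne => (hparts b hb).resolve_left hbne⟩

end NilDual
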